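/- Let H = (V, E) be a 1-Sperner hypergraph with |V| ≥ 2 that has no universal vertex, no isolated vertex, and no pair of twin vertices. Then |E| ≥ ⌈(|V| + 2)/2⌉ (equivalently, 2·|E| ≥ |V| + 2). -/

import Mathlib

/-!
Every 1-Sperner hypergraph with at least two edges has a gluing vertex `z`: each edge through `z`
is contained, up to `z`, in each edge avoiding `z`. It is found by induction after removing an edge
`e` of minimum size, which differs from every other edge in exactly one vertex: either the gluing
vertex of the rest lies in `e`, or all these vertices coincide and glue `e` to the rest.

Split the edges into the family `A` of edges through `z` and the family `B` of edges avoiding it.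
The set of edges through a vertex `v ≠ z` contains `B` if `v` lies on an edge of `A`, and is then
determined by its part in `A`; otherwise it is contained in `B`. By induction, the sets of edges
through single vertices that are nonempty and proper number at most
`2 + (2|A| - 2) + (2|B| - 2) = 2|E| - 2`. Without universal, isolated or twin vertices, the
vertices of `V` give `|V|` distinct such sets.
-/

open Finset

/-- A hypergraph with hyperedge set `E` is 1-Sperner if every two distinct
hyperedges `e, f` satisfy `min |e \ f| |f \ e| = 1`. -/
def OneSperner {α : Type*} [DecidableEq α] (E : Finset (Finset α)) : Prop :=
  ∀ e ∈ E, ∀ f ∈ E, e ≠ f → min (e \ f).card (f \ e).card = 1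

section

variable {α : Type*} [DecidableEq α] {E : Finset (Finset α)} {e f : Finset α} {x z : α}

namespace OneSperner

theorem mono {F : Finset (Finset α)} (hE : OneSperner E) (hF : F ⊆ E) : OneSperner F :=
  fun e he f hf => hE e (hF he) f (hF hf)

theorem card_sdiff_eq_one (hE : OneSperner E) (he : e ∈ E) (hf : f ∈ E) (hef : e ≠ f)
    (hcard : e.card ≤ f.card) : (e \ f).card = 1 := by
  have hmin := hE e he f hf hef
  have he' := card_sdiff_add_card_inter e f
  have hf' := card_sdiff_add_card_inter f e
  rw [inter_comm] at hf'
  omega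

end OneSperner

theorem sdiff_eq_singleton_of_card_eq_one (h : (e \ f).card = 1) (hx : x ∈ e \ f) :
    e \ f = {x} :=
  eq_singleton_iff_unique_mem.2 ⟨hx, fun y hy => card_le_one.1 h.le y hy x hx⟩

theorem subset_insert_of_sdiff_subset_singleton (h : e \ f ⊆ {x}) : e ⊆ insert x f := by
  rw [insert_eq]
  exact sdiff_le_iff'.1 h

def IsGluingVertex (E : Finset (Finset α)) (z : α) : Prop :=
  (∃ e ∈ E, z ∈ e) ∧ (∃ f ∈ E, z ∉ f) ∧ ∀ e ∈ E, ∀ f ∈ E, z ∈ e → z ∉ f → e ⊆ insert z f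

namespace IsGluingVertex

theorem insert_of_mem (hz : IsGluingVertex E z) (hze : z ∈ e)
    (hcard : ∀ g ∈ E, (e \ g).card = 1) : IsGluingVertex (insert e E) z := by
  obtain ⟨-, ⟨f, hf, hzf⟩, hglue⟩ := hz
  refine ⟨⟨e, mem_insert_self e E, hze⟩, ⟨f, mem_insert_of_mem hf, hzf⟩, ?_⟩
  intro a ha b hb hza hzb
  replace hb : b ∈ E := (mem_insert.1 hb).resolve_left (by rintro rfl; exact hzb hze)
  obtain rfl | ha := mem_insert.1 ha
  · exact subset_insert_of_sdiff_subset_singleton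
      (sdiff_eq_singleton_of_card_eq_one (hcard b hb) (mem_sdiff.2 ⟨hza, hzb⟩)).le
  · exact hglue a ha b hb hza hzb

theorem insert_of_forall_sdiff_eq_singleton (hE : E.Nonempty) (h : ∀ g ∈ E, e \ g = {x}) :
    IsGluingVertex (insert e E) x := by
  have hx : ∀ g ∈ E, x ∈ e ∧ x ∉ g := fun g hg => mem_sdiff.1 (h g hg ▸ mem_singleton_self x)
  obtain ⟨g, hg⟩ := hE
  refine ⟨⟨e, mem_insert_self e E, (hx g hg).1⟩, ⟨g, mem_insert_of_mem hg, (hx g hg).2⟩, ?_⟩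
  intro a ha b hb hxa hxb
  obtain rfl | ha := mem_insert.1 ha
  · obtain rfl | hb := mem_insert.1 hb
    · exact absurd hxa hxb
    · exact subset_insert_of_sdiff_subset_singleton (h b hb).le
  · exact absurd hxa (hx a ha).2

theorem exists_sdiff_eq_singleton (hz : IsGluingVertex E z) (hze : z ∉ e)
    (hcard : ∀ g ∈ E, (e \ g).card = 1) : ∃ x, ∀ g ∈ E, e \ g = {x} := by
  obtain ⟨⟨a, ha, hza⟩, ⟨b, hb, hzb⟩, hglue⟩ := hz
  obtain ⟨x, hx⟩ := card_eq_one.1 (hcard a ha)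
  have hxea : x ∈ e \ a := hx ▸ mem_singleton_self x
  have hxz : x ≠ z := by rintro rfl; exact hze (mem_sdiff.1 hxea).1
  have hea : e ⊆ insert x a := subset_insert_of_sdiff_subset_singleton hx.le
  -- `e ⊆ insert x a ⊆ insert x (insert z g)` and `z ∉ e`
  have havoid : ∀ g ∈ E, z ∉ g → e \ g = {x} := by
    intro g hg hzg
    have hag := hglue a ha g hg hza hzg
    refine eq_of_subset_of_card_le (fun y hy => ?_) (by simp [hcard g hg])
    obtain ⟨hye, hyg⟩ := mem_sdiff.1 hy
    rcases mem_insert.1 (hea hye) with rfl | hya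
    · exact mem_singleton_self y
    · rcases mem_insert.1 (hag hya) with rfl | hyg'
      exacts [absurd hye hze, absurd hyg' hyg]
  refine ⟨x, fun g hg => ?_⟩
  by_cases hzg : z ∈ g
  · have hxb : x ∉ b := (mem_sdiff.1 (havoid b hb hzb ▸ mem_singleton_self x)).2
    have hxg : x ∉ g := fun hxg => by
      rcases mem_insert.1 (hglue g hg b hb hzg hzb hxg) with h | h
      exacts [hxz h, hxb h]
    exact sdiff_eq_singleton_of_card_eq_one (hcard g hg) (mem_sdiff.2 ⟨(mem_sdiff.1 hxea).1, hxg⟩)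
  · exact havoid g hg hzg

end IsGluingVertex

theorem OneSperner.exists_isGluingVertex (hE : OneSperner E) (h2 : 2 ≤ E.card) :
    ∃ z, IsGluingVertex E z := by
  induction E using Finset.strongInduction with
  | H E ih =>
  obtain ⟨e, he, hmin⟩ := E.exists_min_image card (card_pos.1 (by omega))
  have hcard : ∀ g ∈ E.erase e, (e \ g).card = 1 := fun g hg =>
    hE.card_sdiff_eq_one he (mem_of_mem_erase hg) (ne_of_mem_erase hg).symm
      (hmin g (mem_of_mem_erase hg))
  have hrest : 1 ≤ (E.erase e).card := by rw [card_erase_of_mem he]; omega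
  have hne : (E.erase e).Nonempty := card_pos.1 hrest
  rw [← insert_erase he]
  obtain hone | htwo := hrest.eq_or_lt
  · obtain ⟨g, hg⟩ := card_eq_one.1 hone.symm
    obtain ⟨x, hx⟩ := card_eq_one.1 (hcard g (hg ▸ mem_singleton_self g))
    exact ⟨x, IsGluingVertex.insert_of_forall_sdiff_eq_singleton hne (by simpa [hg] using hx)⟩
  obtain ⟨z, hz⟩ := ih _ (erase_ssubset he) (hE.mono (erase_subset e E)) htwo
  by_cases hze : z ∈ e
  · exact ⟨z, hz.insert_of_mem hze hcard⟩
  · obtain ⟨x, hx⟩ := hz.exists_sdiff_eq_singleton hze hcard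
    exact ⟨x, IsGluingVertex.insert_of_forall_sdiff_eq_singleton hne hx⟩

def incidentEdges (E : Finset (Finset α)) (v : α) : Finset (Finset α) := E.filter (v ∈ ·)

section incidentEdges

variable {v : α} {p : Finset α → Prop} [DecidablePred p]

theorem incidentEdges_filter : incidentEdges (E.filter p) v = (incidentEdges E v).filter p :=
  filter_comm _ _ _

theorem incidentEdges_eq_union_of_subset (h : E.filter (¬p ·) ⊆ incidentEdges E v) :
    incidentEdges E v = incidentEdges (E.filter p) v ∪ E.filter (¬p ·) := by
  rw [incidentEdges_filter]
  refine (filter_union_filter_not_eq p _).symm.trans ?_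
  congr 1
  exact (filter_subset_filter _ (filter_subset _ E)).antisymm fun g hg =>
    mem_filter.2 ⟨h hg, (mem_filter.1 hg).2⟩

theorem image_incidentEdges_eq_of_superset {U : Finset α}
    (hU : ∀ v ∈ U, E.filter (¬p ·) ⊆ incidentEdges E v) :
    U.image (incidentEdges E) =
      (U.image (incidentEdges (E.filter p))).image (· ∪ E.filter (¬p ·)) := by
  rw [image_image]
  exact image_congr fun v hv => incidentEdges_eq_union_of_subset (hU v hv)

theorem incidentEdges_filter_nonempty_of_ssubset (h : E.filter (¬p ·) ⊂ incidentEdges E v) :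
    (incidentEdges (E.filter p) v).Nonempty := by
  obtain ⟨g, hgv, hg⟩ := exists_of_ssubset h
  obtain ⟨hgE, hvg⟩ := mem_filter.1 hgv
  have hpg : p g := by_contra fun hpg => hg (mem_filter.2 ⟨hgE, hpg⟩)
  exact ⟨g, mem_filter.2 ⟨mem_filter.2 ⟨hgE, hpg⟩, hvg⟩⟩

theorem incidentEdges_filter_ne_of_subset (h : E.filter (¬p ·) ⊆ incidentEdges E v)
    (hv : incidentEdges E v ≠ E) : incidentEdges (E.filter p) v ≠ E.filter p := by
  intro hp
  rw [incidentEdges_eq_union_of_subset h, hp, filter_union_filter_not_eq] at hv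
  exact hv rfl

theorem incidentEdges_filter_eq_of_subset (h : incidentEdges E v ⊆ E.filter p) :
    incidentEdges (E.filter p) v = incidentEdges E v := by
  rw [incidentEdges_filter, filter_true_of_mem fun g hg => (mem_filter.1 (h hg)).2]

end incidentEdges

theorem IsGluingVertex.incidentEdges_cases (hz : IsGluingVertex E z) (v : α) :
    incidentEdges E v = E.filter (z ∈ ·) ∨ incidentEdges E v = E.filter (z ∉ ·) ∨
      E.filter (z ∉ ·) ⊂ incidentEdges E v ∨ incidentEdges E v ⊂ E.filter (z ∉ ·) := by
  obtain rfl | hvz := eq_or_ne v z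
  · exact Or.inl rfl
  suffices E.filter (z ∉ ·) ⊆ incidentEdges E v ∨ incidentEdges E v ⊆ E.filter (z ∉ ·) by
    rcases this with h | h <;> obtain h | h := h.eq_or_ssubset
    exacts [Or.inr (Or.inl h.symm), Or.inr (Or.inr (Or.inl h)), Or.inr (Or.inl h),
      Or.inr (Or.inr (Or.inr h))]
  by_cases h : ∃ a ∈ E, z ∈ a ∧ v ∈ a
  · obtain ⟨a, ha, hza, hva⟩ := h
    left
    intro b hb
    obtain ⟨hb, hzb⟩ := mem_filter.1 hb
    exact mem_filter.2 ⟨hb, (mem_insert.1 (hz.2.2 a ha b hb hza hzb hva)).resolve_left hvz⟩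
  · right
    intro g hg
    obtain ⟨hg, hvg⟩ := mem_filter.1 hg
    exact mem_filter.2 ⟨hg, fun hzg => h ⟨g, hg, hzg, hvg⟩⟩

theorem OneSperner.card_image_incidentEdges_add_two_le (hE : OneSperner E) (hne : E.Nonempty)
    {U : Finset α} (hU : ∀ v ∈ U, (incidentEdges E v).Nonempty ∧ incidentEdges E v ≠ E) :
    (U.image (incidentEdges E)).card + 2 ≤ 2 * E.card := by
  induction E using Finset.strongInduction generalizing U with
  | H E ih =>
  obtain hone | htwo := (one_le_card.2 hne).eq_or_lt
  · obtain ⟨e, rfl⟩ := card_eq_one.1 hone.symm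
    have hU : U = ∅ := eq_empty_of_forall_notMem fun v hv =>
      (hU v hv).2 (((hU v hv).1.subset_singleton_iff).1 (filter_subset _ _))
    simp [hU]
  obtain ⟨z, hz⟩ := hE.exists_isGluingVertex htwo
  set I := incidentEdges E
  set A := E.filter (z ∈ ·)
  set B := E.filter (z ∉ ·)
  set U₁ := U.filter (B ⊂ I ·)
  set U₂ := U.filter (I · ⊂ B)
  have hcover : U.image I ⊆ insert A (insert B (U₁.image I ∪ U₂.image I)) := by
    intro s hs
    obtain ⟨v, hv, rfl⟩ := mem_image.1 hs
    rcases hz.incidentEdges_cases v with h | h | h | h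
    · exact mem_insert.2 (Or.inl h)
    · exact mem_insert_of_mem (mem_insert.2 (Or.inl h))
    · exact mem_insert_of_mem <| mem_insert_of_mem <|
        mem_union_left _ (mem_image_of_mem _ (mem_filter.2 ⟨hv, h⟩))
    · exact mem_insert_of_mem <| mem_insert_of_mem <|
        mem_union_right _ (mem_image_of_mem _ (mem_filter.2 ⟨hv, h⟩))
  have hA : (U₁.image I).card + 2 ≤ 2 * A.card := by
    have hsup : ∀ v ∈ U₁, B ⊂ I v := fun v hv => (mem_filter.1 hv).2
    rw [image_incidentEdges_eq_of_superset (p := fun g => z ∈ g) fun v hv => (hsup v hv).subset]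
    refine (Nat.add_le_add_right card_image_le 2).trans <|
      ih A (filter_ssubset.2 hz.2.1) (hE.mono (filter_subset _ E))
        (hz.1.imp fun e he => mem_filter.2 he) fun v hv =>
          ⟨incidentEdges_filter_nonempty_of_ssubset (hsup v hv),
            incidentEdges_filter_ne_of_subset (hsup v hv).subset (hU v (mem_filter.1 hv).1).2⟩
  have hB : (U₂.image I).card + 2 ≤ 2 * B.card := by
    have hsub : ∀ v ∈ U₂, I v ⊂ B := fun v hv => (mem_filter.1 hv).2
    rw [image_congr fun v hv => (incidentEdges_filter_eq_of_subset (hsub v hv).subset).symm]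
    refine ih B (filter_ssubset.2 (by simpa using hz.1)) (hE.mono (filter_subset _ E))
      (hz.2.1.imp fun f hf => mem_filter.2 hf) fun v hv => ?_
    rw [incidentEdges_filter_eq_of_subset (hsub v hv).subset]
    exact ⟨(hU v (mem_filter.1 hv).1).1, (hsub v hv).ne⟩
  have hAB : A.card + B.card = E.card := card_filter_add_card_filter_not _
  have := card_le_card hcover
  have := card_insert_le A (insert B (U₁.image I ∪ U₂.image I))
  have := card_insert_le B (U₁.image I ∪ U₂.image I)
  have := card_union_le (U₁.image I) (U₂.image I)
  omega

end

theorem stmt_14_general {α : Type*} [DecidableEq α] (V : Finset α) (E : Finset (Finset α))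
    (h : OneSperner E) (hV : 2 ≤ V.card)
    (hNoUniversal : ¬∃ u ∈ V, ∀ e ∈ E, u ∈ e)
    (hNoIsolated : ¬∃ u ∈ V, ∀ e ∈ E, u ∉ e)
    (hNoTwins : ∀ u ∈ V, ∀ v ∈ V, u ≠ v → ¬(∀ e ∈ E, u ∈ e ↔ v ∈ e)) :
    V.card + 2 ≤ 2 * E.card := by
  have hproper : ∀ v ∈ V, (incidentEdges E v).Nonempty ∧ incidentEdges E v ≠ E := by
    refine fun v hv => ⟨filter_nonempty_iff.2 ?_, fun hall => hNoUniversal ⟨v, hv, ?_⟩⟩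
    · by_contra! hiso
      exact hNoIsolated ⟨v, hv, hiso⟩
    · exact filter_eq_self.1 hall
  have hinj : Set.InjOn (incidentEdges E) V := fun u hu v hv huv => by
    by_contra hne
    exact hNoTwins u hu v hv hne fun e he => filter_inj'.1 huv he
  obtain ⟨u, hu⟩ := card_pos.1 (by omega : 0 < V.card)
  have hE : E.Nonempty := (hproper u hu).1.mono (filter_subset _ E)
  have hcount := h.card_image_incidentEdges_add_two_le hE hproper
  rwa [card_image_of_injOn hinj] at hcount

theorem stmt_14 {α : Type*} [DecidableEq α] (V : Finset α) (E : Finset (Finset α))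
    (hE : ∀ e ∈ E, e ⊆ V) (h : OneSperner E) (hV : 2 ≤ V.card)
    (hNoUniversal : ¬∃ u ∈ V, ∀ e ∈ E, u ∈ e)
    (hNoIsolated : ¬∃ u ∈ V, ∀ e ∈ E, u ∉ e)
    (hNoTwins : ∀ u ∈ V, ∀ v ∈ V, u ≠ v → ¬(∀ e ∈ E, u ∈ e ↔ v ∈ e)) :
    V.card + 2 ≤ 2 * E.card :=
  stmt_14_general V E h hV hNoUniversal hNoIsolated hNoTwins
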